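/- arXiv:2003.01055 — 2 statements merged into one kernel-verified Lean document; each statement's English description precedes it below -/
import Mathlib

section
/- Let ≥_* be a reflexive, transitive relation on 𝔉(Ω) satisfying axioms (i)–(iii). Then ≥_* may be represented by some P ∈ Prob(Ω) if and only if (a) ≥_* satisfies the robustness property: f + ε >_* 0 for all ε > 0 implies f ≥_* 0, and (b) there exists ρ ∈ Π(B(Ω)) with market power 𝓂(ρ) < 1. -/
/-!
If `P` represents `≥_*`, then `f ≥_* h` means `P(f ≤ h - ε) = 0` for every `ε > 0`, which is
visibly robust. A price comes from Hahn–Banach: a linear functional below the upper `P`-integral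
of bounded functions is monotone for `≥_*`, strictly positive on `f >_* 0`, and, being linear,
has no market power.

Conversely, under robustness `f ≥_* h` holds exactly when every set `{f ≤ h - ε}` is negligible,
and `A` is negligible exactly when `ρ(1_A) ≤ 0`. Market power `m < 1` gives
`Σ ρ(fᵢ) ≤ (1 - m)⁻¹ ρ(Σ fᵢ)` for nonnegative `fᵢ`, which is what the Mazur–Orlicz form of
Hahn–Banach needs to produce, for each `δ > 0`, a positive linear functional below
`(1 - m)⁻¹ ρ` that is at least `δ` on every indicator of price at least `δ`. Normalising these
functionals for `δ = 1/(n+1)` and mixing them with weights `2^-(n+1)` yields a finitely additive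
probability whose null sets are exactly the negligible sets, hence one representing `≥_*`.
-/

open Set Filter

/-- A reflexive and transitive binary relation `≥_*` on real valued functions on `Ω`
satisfying the rationality axioms (i)-(iii) of the paper. -/
structure Rationality (Ω : Type*) where
  ge : (Ω → ℝ) → (Ω → ℝ) → Prop
  refl : ∀ f, ge f f
  trans : ∀ f g h, ge f g → ge g h → ge f h
  /-- axiom (i), first part : `1 >_* 0`. -/
  one_gt_zero : ge 1 0 ∧ ¬ ge 0 1
  /-- axiom (i), second part : pointwise domination implies `≥_*`. -/
  ge_of_le : ∀ f g : Ω → ℝ, (∀ ω, g ω ≤ f ω) → ge f g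
  /-- axiom (ii) : `f ≥_* g` implies `b f + h ≥_* b g + h` for bounded `b ≥ 0`. -/
  affine : ∀ f g b h : Ω → ℝ, ge f g → (∀ ω, 0 ≤ b ω) → (∃ c : ℝ, ∀ ω, b ω ≤ c) →
    ge (fun ω => b ω * f ω + h ω) (fun ω => b ω * g ω + h ω)
  /-- axiom (iii) : `f >_* 0` implies `f ∧ 1 >_* 0`. -/
  trunc : ∀ f : Ω → ℝ, ge f 0 → ¬ ge 0 f →
    ge (fun ω => min (f ω) 1) 0 ∧ ¬ ge 0 (fun ω => min (f ω) 1)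

/-- The asymmetric (strict) part `>_*` of `≥_*`. -/
def Rationality.gt {Ω : Type*} (R : Rationality Ω) (f g : Ω → ℝ) : Prop :=
  R.ge f g ∧ ¬ R.ge g f

/-- A set `A ⊆ Ω` is negligible when `0 ≥_* 1_A`. -/
def Rationality.Negligible {Ω : Type*} (R : Rationality Ω) (A : Set Ω) : Prop :=
  R.ge 0 (A.indicator fun _ => (1 : ℝ))

/-- `𝒳` is a market : a convex set of functions containing `0` and `1`, whose elements are
`≥_*`-bounded below by constants and which is stable under addition of nonnegative constants. -/
structure IsMarket {Ω : Type*} (R : Rationality Ω) (X : Set (Ω → ℝ)) : Prop where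
  convex : ∀ f ∈ X, ∀ g ∈ X, ∀ t : ℝ, 0 ≤ t → t ≤ 1 →
    (fun ω => t * f ω + (1 - t) * g ω) ∈ X
  zero_mem : (0 : Ω → ℝ) ∈ X
  one_mem : (1 : Ω → ℝ) ∈ X
  bddBelow : ∀ f ∈ X, ∃ a : ℝ, R.ge f (fun _ => a)
  add_nonneg_const : ∀ f ∈ X, ∀ lam : ℝ, 0 ≤ lam → (fun ω => f ω + lam) ∈ X

/-- `π ∈ Π₀(𝒳)` : positively homogeneous, subadditive, normalized and `≥_*`-monotone on `X`. -/
structure IsPriceFun0 {Ω : Type*} (R : Rationality Ω) (X : Set (Ω → ℝ))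
    (π : (Ω → ℝ) → ℝ) : Prop where
  posHom : ∀ f ∈ X, ∀ lam : ℝ, 0 < lam → (fun ω => lam * f ω) ∈ X →
    π (fun ω => lam * f ω) = lam * π f
  subadd : ∀ f ∈ X, ∀ g ∈ X, (fun ω => f ω + g ω) ∈ X →
    π (fun ω => f ω + g ω) ≤ π f + π g
  norm_one : π 1 = 1
  mono : ∀ f ∈ X, ∀ g ∈ X, R.ge f g → π g ≤ π f

/-- `π ∈ Π(𝒳)` : a price function, i.e. an element of `Π₀(𝒳)` free of arbitrage. -/
structure IsPriceFun {Ω : Type*} (R : Rationality Ω) (X : Set (Ω → ℝ))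
    (π : (Ω → ℝ) → ℝ) extends IsPriceFun0 R X π : Prop where
  arbFree : ∀ f ∈ X, R.gt f 0 → 0 < π f

/-- Cash additivity of a price `π` on the set `X`. -/
def CashAdditive {Ω : Type*} (X : Set (Ω → ℝ)) (π : (Ω → ℝ) → ℝ) : Prop :=
  ∀ f ∈ X, ∀ a : ℝ, (fun ω => f ω + a) ∈ X → π (fun ω => f ω + a) = π f + a

/-- The cash additive part `π^a` of `π` : `π^a(f) = inf {π(f + t) - t : t ∈ ℝ, f + t ∈ X}`. -/
noncomputable def cashPart {Ω : Type*} (X : Set (Ω → ℝ)) (π : (Ω → ℝ) → ℝ)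
    (f : Ω → ℝ) : ℝ :=
  sInf {y | ∃ t : ℝ, (fun ω => f ω + t) ∈ X ∧ y = π (fun ω => f ω + t) - t}

/-- `L(𝒳)` : the superhedgeable claims `{g : λ X ≥_* |g| for some λ > 0, X ∈ 𝒳}`. -/
def Lspan {Ω : Type*} (R : Rationality Ω) (X : Set (Ω → ℝ)) : Set (Ω → ℝ) :=
  {g | ∃ lam : ℝ, 0 < lam ∧ ∃ f ∈ X, R.ge (fun ω => lam * f ω) (fun ω => |g ω|)}

/-- `𝒞(π) = {g : λ[X - π(X)] ≥_* g for some λ > 0, X ∈ 𝒳}`. -/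
def Cpi {Ω : Type*} (R : Rationality Ω) (X : Set (Ω → ℝ)) (π : (Ω → ℝ) → ℝ) :
    Set (Ω → ℝ) :=
  {g | ∃ lam : ℝ, 0 < lam ∧ ∃ f ∈ X, R.ge (fun ω => lam * (f ω - π f)) g}

/-- Closure in the topology of uniform distance on `𝔉(Ω)`. -/
def uClosure {Ω : Type*} (A : Set (Ω → ℝ)) : Set (Ω → ℝ) :=
  {g | ∀ ε : ℝ, 0 < ε → ∃ h ∈ A, ∀ ω, |g ω - h ω| ≤ ε}

/-- A finitely additive probability defined on the power set of `Ω`. -/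
structure FinAddProb (Ω : Type*) where
  meas : Set Ω → ℝ
  nonneg : ∀ A, 0 ≤ meas A
  total : meas Set.univ = 1
  additive : ∀ A B, Disjoint A B → meas (A ∪ B) = meas A + meas B

/-- Countable additivity of a finitely additive probability. -/
def FinAddProb.CountablyAdditive {Ω : Type*} (m : FinAddProb Ω) : Prop :=
  ∀ A : ℕ → Set Ω, (Pairwise fun i j => Disjoint (A i) (A j)) →
    HasSum (fun n => m.meas (A n)) (m.meas (⋃ n, A n))

/-- Upper tail `∫_0^∞ m(f > t) dt` (with values in `ℝ≥0∞`), used to define the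
finitely additive integral. -/
noncomputable def posTail {Ω : Type*} (m : FinAddProb Ω) (f : Ω → ℝ) : ENNReal :=
  ∫⁻ t in Set.Ioi (0 : ℝ), ENNReal.ofReal (m.meas {ω | t < f ω})

/-- `f ∈ L¹(m)` : both tail integrals are finite. -/
def MemL1 {Ω : Type*} (m : FinAddProb Ω) (f : Ω → ℝ) : Prop :=
  posTail m f ≠ ⊤ ∧ posTail m (fun ω => - f ω) ≠ ⊤

/-- The integral `∫ f dm` with respect to a finitely additive probability. -/
noncomputable def faIntegral {Ω : Type*} (m : FinAddProb Ω) (f : Ω → ℝ) : ℝ :=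
  (posTail m f).toReal - (posTail m (fun ω => - f ω)).toReal

/-- Closure of `A` with respect to the `L¹(m)` distance. -/
def L1Closure {Ω : Type*} (m : FinAddProb Ω) (A : Set (Ω → ℝ)) : Set (Ω → ℝ) :=
  {g | ∀ ε : ℝ, 0 < ε → ∃ h ∈ A, MemL1 m (fun ω => g ω - h ω) ∧
    faIntegral m (fun ω => |g ω - h ω|) ≤ ε}

/-- The set `M₀(π)` of pricing measures. -/
def M0 {Ω : Type*} (R : Rationality Ω) (X : Set (Ω → ℝ)) (π : (Ω → ℝ) → ℝ) :
    Set (FinAddProb Ω) :=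
  {m | (∀ g ∈ Lspan R X, MemL1 m g) ∧ ∀ f ∈ X, faIntegral m f ≤ π f}

/-- The set `M(π)` of strictly positive pricing measures :
those `m ∈ M₀(π)` with `∫ (f ∧ 1) dm > 0` whenever `f >_* 0`. -/
def Mstrict {Ω : Type*} (R : Rationality Ω) (X : Set (Ω → ℝ)) (π : (Ω → ℝ) → ℝ) :
    Set (FinAddProb Ω) :=
  {m | m ∈ M0 R X π ∧ ∀ f : Ω → ℝ, R.gt f 0 → 0 < faIntegral m (fun ω => min (f ω) 1)}

/-- The set `M(π; Y)` : elements of `M₀(π)` with `∫ (f ∧ 1) dm > 0` for `f ∈ Y`, `f >_* 0`. -/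
def MstrictOn {Ω : Type*} (R : Rationality Ω) (X : Set (Ω → ℝ)) (π : (Ω → ℝ) → ℝ)
    (Y : Set (Ω → ℝ)) : Set (FinAddProb Ω) :=
  {m | m ∈ M0 R X π ∧ ∀ f ∈ Y, R.gt f 0 → 0 < faIntegral m (fun ω => min (f ω) 1)}

/-- `𝒳₁ = {X ∧ k : X ∈ 𝒳, k ∈ ℝ₊ ∪ {+∞}}` (`k = +∞` yielding `X` itself). -/
def X1 {Ω : Type*} (X : Set (Ω → ℝ)) : Set (Ω → ℝ) :=
  {g | ∃ f ∈ X, g = f ∨ ∃ k : ℝ, 0 ≤ k ∧ g = fun ω => min (f ω) k}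

/-- The market power `𝓂(ρ)` : the supremum of
`[Σ ρ(fᵢ) - ρ(Σ fᵢ)] / Σ ρ(fᵢ)` over finite families of nonnegative bounded functions
(with the convention `0/0 = 0`, automatic in Lean). -/
noncomputable def marketPower {Ω : Type*} (ρ : (Ω → ℝ) → ℝ) : ℝ :=
  sSup {r | ∃ (N : ℕ) (f : Fin N → Ω → ℝ),
    (∀ i, ∀ ω, 0 ≤ f i ω) ∧ (∀ i, ∃ c : ℝ, ∀ ω, f i ω ≤ c) ∧
    r = ((∑ i, ρ (f i)) - ρ (fun ω => ∑ i, f i ω)) / (∑ i, ρ (f i))}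

/-- The relative market power `𝓂(ρ; Y)`, the supremum being restricted to finite families
of nonnegative bounded functions belonging to `Y`. -/
noncomputable def marketPowerOn {Ω : Type*} (Y : Set (Ω → ℝ)) (ρ : (Ω → ℝ) → ℝ) : ℝ :=
  sSup {r | ∃ (N : ℕ) (f : Fin N → Ω → ℝ), (∀ i, f i ∈ Y) ∧
    (∀ i, ∀ ω, 0 ≤ f i ω) ∧ (∀ i, ∃ c : ℝ, ∀ ω, f i ω ≤ c) ∧
    r = ((∑ i, ρ (f i)) - ρ (fun ω => ∑ i, f i ω)) / (∑ i, ρ (f i))}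

/-- A sequence of nonnegative bounded functions whose sum is bounded. -/
def GoodSeq {Ω : Type*} (f : ℕ → Ω → ℝ) : Prop :=
  (∀ n, ∀ ω, 0 ≤ f n ω) ∧ (∀ n, ∃ c : ℝ, ∀ ω, f n ω ≤ c) ∧
  (∃ c : ℝ, ∀ ω, ∀ k : ℕ, (∑ n ∈ Finset.range k, f n ω) ≤ c)

/-- The pointwise sum `Σₙ fₙ`. -/
noncomputable def seqSum {Ω : Type*} (f : ℕ → Ω → ℝ) : Ω → ℝ :=
  fun ω => ∑' n, f n ω

/-- The ratio `[Σ_{n ≤ k} ρ(fₙ) - ρ(Σₙ fₙ)] / Σ_{n ≤ k} ρ(fₙ)`. -/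
noncomputable def mcRatioSeq {Ω : Type*} (ρ : (Ω → ℝ) → ℝ) (f : ℕ → Ω → ℝ) (k : ℕ) : ℝ :=
  ((∑ n ∈ Finset.range (k + 1), ρ (f n)) - ρ (seqSum f)) /
    (∑ n ∈ Finset.range (k + 1), ρ (f n))

/-- `𝓂_c(ρ; f₁, f₂, …)` : the limit as `k → ∞` of the above ratios (as an extended real,
computed as a `limsup`, which coincides with the limit whenever the latter exists). -/
noncomputable def mcVal {Ω : Type*} (ρ : (Ω → ℝ) → ℝ) (f : ℕ → Ω → ℝ) : EReal :=
  Filter.limsup (fun k => ((mcRatioSeq ρ f k : ℝ) : EReal)) Filter.atTop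

/-- `𝓂_c(ρ)` : the supremum of `𝓂_c(ρ; f₁, f₂, …)` over all admissible sequences. -/
noncomputable def mcSup {Ω : Type*} (ρ : (Ω → ℝ) → ℝ) : EReal :=
  sSup {v | ∃ f : ℕ → Ω → ℝ, GoodSeq f ∧ v = mcVal ρ f}

/-- `𝓃_c(ρ)` : minus the infimum of `𝓂_c(ρ; f₁, f₂, …)` over all admissible sequences. -/
noncomputable def ncVal {Ω : Type*} (ρ : (Ω → ℝ) → ℝ) : EReal :=
  - sInf {v | ∃ f : ℕ → Ω → ℝ, GoodSeq f ∧ v = mcVal ρ f}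

/-- The set `B(Ω)` of bounded functions. -/
def BddFun (Ω : Type*) : Set (Ω → ℝ) :=
  {f | ∃ c : ℝ, ∀ ω, |f ω| ≤ c}

/-- `P` represents `≥_*` : `f ≥_* h` iff `inf_{ε > 0} P(f > h - ε) = 1`. -/
def Represents {Ω : Type*} (P : FinAddProb Ω) (R : Rationality Ω) : Prop :=
  ∀ f h : Ω → ℝ,
    R.ge f h ↔ sInf {x | ∃ ε : ℝ, 0 < ε ∧ x = P.meas {ω | h ω - ε < f ω}} = 1

/-- The robustness property (4d) : `f + ε >_* 0` for all `ε > 0` implies `f ≥_* 0`. -/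
def Robust {Ω : Type*} (R : Rationality Ω) : Prop :=
  ∀ f : Ω → ℝ, (∀ ε : ℝ, 0 < ε → R.gt (fun ω => f ω + ε) 0) → R.ge f 0


namespace FinAddProb

variable {Ω : Type*} (P : FinAddProb Ω)

theorem meas_empty : P.meas ∅ = 0 := by
  have h := P.additive ∅ ∅ (disjoint_empty _)
  rw [union_empty] at h
  linarith

theorem meas_inter_add_meas_diff (A B : Set Ω) :
    P.meas (B ∩ A) + P.meas (B \ A) = P.meas B := by
  rw [← P.additive _ _ disjoint_sdiff_inter.symm, inter_union_sdiff]

theorem meas_mono {A B : Set Ω} (h : A ⊆ B) : P.meas A ≤ P.meas B := by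
  have := P.meas_inter_add_meas_diff A B
  rw [inter_eq_self_of_subset_right h] at this
  linarith [P.nonneg (B \ A)]

theorem meas_compl (A : Set Ω) : P.meas Aᶜ = 1 - P.meas A := by
  rw [← P.total, ← union_compl_self A, P.additive _ _ disjoint_compl_right]
  ring

theorem meas_eq_one_iff_meas_compl_eq_zero (A : Set Ω) : P.meas A = 1 ↔ P.meas Aᶜ = 0 := by
  rw [meas_compl]
  constructor <;> intro h <;> linarith

theorem sInf_meas_eq_one_iff (v : ℝ → Set Ω) :
    sInf {x | ∃ ε : ℝ, 0 < ε ∧ x = P.meas (v ε)} = 1 ↔ ∀ ε : ℝ, 0 < ε → P.meas (v ε) = 1 := by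
  have hbdd : BddBelow {x | ∃ ε : ℝ, 0 < ε ∧ x = P.meas (v ε)} :=
    ⟨0, by rintro _ ⟨ε, -, rfl⟩; exact P.nonneg _⟩
  have hle : ∀ ε, P.meas (v ε) ≤ 1 := fun ε => P.total ▸ P.meas_mono (subset_univ _)
  constructor
  · intro h ε hε
    exact le_antisymm (hle ε) (h ▸ csInf_le hbdd ⟨ε, hε, rfl⟩)
  · intro h
    refine le_antisymm ((csInf_le hbdd ⟨1, one_pos, rfl⟩).trans (hle 1))
      (le_csInf ⟨_, 1, one_pos, rfl⟩ ?_)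
    rintro _ ⟨ε, hε, rfl⟩
    exact (h ε hε).ge

end FinAddProb

theorem represents_iff {Ω : Type*} {P : FinAddProb Ω} {R : Rationality Ω} :
    Represents P R ↔
      ∀ f h : Ω → ℝ, R.ge f h ↔ ∀ ε : ℝ, 0 < ε → P.meas {ω | f ω ≤ h ω - ε} = 0 := by
  have hcompl : ∀ (f h : Ω → ℝ) ε, {ω | h ω - ε < f ω}ᶜ = {ω | f ω ≤ h ω - ε} := by
    intro f h ε; ext; simp
  simp only [Represents, P.sInf_meas_eq_one_iff, P.meas_eq_one_iff_meas_compl_eq_zero, hcompl]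

namespace Rationality

variable {Ω : Type*} (R : Rationality Ω)

theorem ge_add_right {f g : Ω → ℝ} (h : R.ge f g) (k : Ω → ℝ) : R.ge (f + k) (g + k) := by
  have h1 := R.affine f g 1 k h (fun _ => zero_le_one) ⟨1, fun _ => le_rfl⟩
  simp only [Pi.one_apply, one_mul] at h1
  exact h1

theorem negligible_mono {A B : Set Ω} (hB : R.Negligible B) (h : A ⊆ B) : R.Negligible A :=
  R.trans _ _ _ hB
    (R.ge_of_le _ _ fun _ => indicator_le_indicator_of_subset h (fun _ => zero_le_one) _)

theorem negligible_union {A B : Set Ω} (hA : R.Negligible A) (hB : R.Negligible B) :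
    R.Negligible (A ∪ B) := by
  have hBA := R.ge_add_right hB (A.indicator 1)
  rw [zero_add] at hBA
  refine R.trans _ _ _ (R.trans _ _ _ hA hBA) (R.ge_of_le _ _ fun ω => ?_)
  by_cases hωA : ω ∈ A <;> by_cases hωB : ω ∈ B <;> simp [hωA, hωB]

theorem not_negligible_univ : ¬ R.Negligible (univ : Set Ω) := by
  intro h
  rw [Rationality.Negligible, indicator_univ] at h
  exact R.one_gt_zero.2 h

theorem negligible_of_ge {f h : Ω → ℝ} (hfh : R.ge f h) {ε : ℝ} (hε : 0 < ε) :
    R.Negligible {ω | f ω ≤ h ω - ε} := by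
  set A := {ω | f ω ≤ h ω - ε}
  set b : Ω → ℝ := A.indicator fun _ => ε⁻¹
  have hb : 0 ≤ b := indicator_nonneg (fun _ _ => by positivity)
  have key : R.ge (b * f + -(b * f)) (b * h + -(b * f)) :=
    R.affine f h b _ hfh hb ⟨ε⁻¹, indicator_le_self' fun _ _ => by positivity⟩
  rw [add_neg_cancel] at key
  refine R.trans _ _ _ key (R.ge_of_le _ _ fun ω => ?_)
  by_cases hω : ω ∈ A
  · have : f ω ≤ h ω - ε := hω
    simp only [Pi.add_apply, Pi.mul_apply, Pi.neg_apply, b, indicator_of_mem hω]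
    rw [← sub_eq_add_neg, ← mul_sub, le_inv_mul_iff₀ hε]
    linarith
  · simp [b, hω]

/-- Axiom (iii) is what lets a negligible set absorb an unbounded negative part. -/
theorem ge_zero_of_nonneg_off_negligible {A : Set Ω} (hA : R.Negligible A) {g : Ω → ℝ}
    (hg : ∀ ω ∉ A, 0 ≤ g ω) : R.ge g 0 := by
  set φ : Ω → ℝ := fun ω => max (-g ω) 0
  have hφ : R.ge 0 φ := by
    by_contra hφ
    refine (R.trunc φ (R.ge_of_le _ _ fun ω => le_max_right _ _) hφ).2
      (R.trans _ _ _ hA (R.ge_of_le _ _ fun ω => ?_))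
    by_cases hω : ω ∈ A
    · simp [hω]
    · simp [φ, hω, hg ω hω]
  have hgφ := R.ge_add_right hφ g
  rw [zero_add] at hgφ
  exact R.trans _ _ _ hgφ (R.ge_of_le _ _ fun ω => by
    simp only [Pi.add_apply, Pi.zero_apply, φ]
    linarith [le_max_left (-g ω) 0])

theorem ge_of_forall_negligible (hR : Robust R) {f h : Ω → ℝ}
    (hfh : ∀ ε : ℝ, 0 < ε → R.Negligible {ω | f ω ≤ h ω - ε}) : R.ge f h := by
  have hsub : R.ge (f - h) 0 := by
    refine hR _ fun ε hε => ⟨R.ge_zero_of_nonneg_off_negligible (hfh ε hε) fun ω hω => ?_, ?_⟩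
    · have : h ω - ε < f ω := not_le.mp hω
      simp only [Pi.sub_apply]
      linarith
    · intro hle
      refine R.not_negligible_univ (R.negligible_mono
        (R.negligible_union (hfh (ε / 2) (half_pos hε)) (R.negligible_of_ge hle (half_pos hε)))
        fun ω _ => ?_)
      by_cases hω : f ω ≤ h ω - ε / 2
      · exact Or.inl hω
      · refine Or.inr (show (0 : Ω → ℝ) ω ≤ (f - h) ω + ε - ε / 2 by
          simp only [Pi.zero_apply, Pi.sub_apply]
          linarith [not_le.mp hω])
  simpa using R.ge_add_right hsub h

theorem ge_iff_forall_negligible (hR : Robust R) (f h : Ω → ℝ) :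
    R.ge f h ↔ ∀ ε : ℝ, 0 < ε → R.Negligible {ω | f ω ≤ h ω - ε} :=
  ⟨fun hfh _ hε => R.negligible_of_ge hfh hε, R.ge_of_forall_negligible hR⟩

end Rationality

section PriceFunctionals

variable {Ω : Type*}

def bddSubmodule (Ω : Type*) : Submodule ℝ (Ω → ℝ) where
  carrier := BddFun Ω
  add_mem' := by
    rintro f g ⟨a, ha⟩ ⟨b, hb⟩
    exact ⟨a + b, fun ω => (abs_add_le _ _).trans (add_le_add (ha ω) (hb ω))⟩
  zero_mem' := ⟨0, fun _ => by simp⟩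
  smul_mem' := by
    rintro c f ⟨a, ha⟩
    refine ⟨|c| * a, fun ω => ?_⟩
    rw [Pi.smul_apply, smul_eq_mul, abs_mul]
    exact mul_le_mul_of_nonneg_left (ha ω) (abs_nonneg c)

theorem mem_bddFun_of_nonneg_of_le {f : Ω → ℝ} (hf : 0 ≤ f) {c : ℝ} (hc : ∀ ω, f ω ≤ c) :
    f ∈ BddFun Ω :=
  ⟨c, fun ω => (abs_of_nonneg (hf ω)).trans_le (hc ω)⟩

theorem one_mem_bddFun : (1 : Ω → ℝ) ∈ BddFun Ω :=
  ⟨1, fun _ => by simp⟩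

theorem indicator_one_mem_bddFun (A : Set Ω) : A.indicator 1 ∈ BddFun Ω :=
  mem_bddFun_of_nonneg_of_le (indicator_nonneg (fun _ _ => zero_le_one))
    (indicator_le_self' (fun _ _ => zero_le_one))

namespace IsPriceFun0

variable {R : Rationality Ω} {ρ : (Ω → ℝ) → ℝ} (hρ : IsPriceFun0 R (BddFun Ω) ρ)
include hρ

theorem map_zero : ρ 0 = 0 := by
  have h : ρ ((2 : ℝ) • (0 : Ω → ℝ)) = 2 * ρ 0 := hρ.posHom 0 (bddSubmodule Ω).zero_mem 2 two_pos
    ((bddSubmodule Ω).smul_mem 2 (bddSubmodule Ω).zero_mem)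
  rw [smul_zero] at h
  linarith

theorem map_smul {f : Ω → ℝ} (hf : f ∈ BddFun Ω) {c : ℝ} (hc : 0 ≤ c) : ρ (c • f) = c * ρ f := by
  rcases hc.eq_or_lt with rfl | hc
  · rw [zero_smul, zero_mul, hρ.map_zero]
  · exact hρ.posHom f hf c hc ((bddSubmodule Ω).smul_mem c hf)

theorem map_add_le {f g : Ω → ℝ} (hf : f ∈ BddFun Ω) (hg : g ∈ BddFun Ω) :
    ρ (f + g) ≤ ρ f + ρ g :=
  hρ.subadd f hf g hg ((bddSubmodule Ω).add_mem hf hg)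

theorem mono_of_le {f g : Ω → ℝ} (hf : f ∈ BddFun Ω) (hg : g ∈ BddFun Ω) (h : g ≤ f) :
    ρ g ≤ ρ f :=
  hρ.mono f hf g hg (R.ge_of_le f g h)

theorem nonneg {f : Ω → ℝ} (hf : f ∈ BddFun Ω) (h : 0 ≤ f) : 0 ≤ ρ f :=
  hρ.map_zero ▸ hρ.mono_of_le hf (bddSubmodule Ω).zero_mem h

theorem ratio_le_marketPower {N : ℕ} (f : Fin N → Ω → ℝ) (hpos : ∀ i ω, 0 ≤ f i ω)
    (hbdd : ∀ i, ∃ c, ∀ ω, f i ω ≤ c) :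
    ((∑ i, ρ (f i)) - ρ (fun ω => ∑ i, f i ω)) / (∑ i, ρ (f i)) ≤ marketPower ρ := by
  refine le_csSup ⟨1, ?_⟩ ⟨N, f, hpos, hbdd, rfl⟩
  rintro _ ⟨M, g, hg, hgc, rfl⟩
  have hmem : ∀ i, g i ∈ BddFun Ω := fun i =>
    mem_bddFun_of_nonneg_of_le (hg i) (hgc i).choose_spec
  have hsum : (fun ω => ∑ i, g i ω) = ∑ i, g i := funext fun ω => (Finset.sum_apply ω _ _).symm
  refine div_le_one_of_le₀ (sub_le_self _ ?_)
    (Finset.sum_nonneg fun i _ => hρ.nonneg (hmem i) (hg i))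
  rw [hsum]
  exact hρ.nonneg ((bddSubmodule Ω).sum_mem fun i _ => hmem i) (Finset.sum_nonneg fun i _ => hg i)

theorem one_sub_marketPower_mul_sum_le (fs : List (Ω → ℝ))
    (hfs : ∀ f ∈ fs, 0 ≤ f ∧ f ∈ BddFun Ω) :
    (1 - marketPower ρ) * (fs.map ρ).sum ≤ ρ fs.sum := by
  have hF : ∀ i : Fin fs.length, 0 ≤ fs[i.1] ∧ fs[i.1] ∈ BddFun Ω :=
    fun i => hfs _ (List.getElem_mem _)
  have hratio := hρ.ratio_le_marketPower (fun i : Fin fs.length => fs[i.1]) (fun i => (hF i).1)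
    (fun i => (hF i).2.imp fun c hc ω => le_of_abs_le (hc ω))
  have hsum : (fun ω => ∑ i : Fin fs.length, fs[i.1] ω) = fs.sum := by
    funext ω
    rw [← Finset.sum_apply, Fin.sum_univ_getElem]
  rw [hsum, Fin.sum_univ_fun_getElem] at hratio
  have hS : 0 ≤ (fs.map ρ).sum :=
    List.sum_nonneg fun _ hx => by
      obtain ⟨f, hf, rfl⟩ := List.mem_map.mp hx
      exact hρ.nonneg (hfs f hf).2 (hfs f hf).1
  rcases hS.eq_or_lt with hS | hS
  · rw [← hS, mul_zero]
    exact hρ.nonneg ((bddSubmodule Ω).list_sum_mem fun f hf => (hfs f hf).2)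
      (List.sum_nonneg fun f hf => (hfs f hf).1)
  · rw [div_le_iff₀ hS] at hratio
    linarith

end IsPriceFun0

theorem IsPriceFun.negligible_iff {R : Rationality Ω} {ρ : (Ω → ℝ) → ℝ}
    (hρ : IsPriceFun R (BddFun Ω) ρ) (A : Set Ω) : R.Negligible A ↔ ρ (A.indicator 1) ≤ 0 := by
  refine ⟨fun hA => ?_, fun hA => ?_⟩
  · exact hρ.map_zero ▸ hρ.mono _ (bddSubmodule Ω).zero_mem _ (indicator_one_mem_bddFun A) hA
  · by_contra hneg
    exact hA.not_gt (hρ.arbFree _ (indicator_one_mem_bddFun A)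
      ⟨R.ge_of_le _ _ (indicator_nonneg fun _ _ => zero_le_one), hneg⟩)

theorem marketPower_linearMap_nonpos (L : (Ω → ℝ) →ₗ[ℝ] ℝ) : marketPower L ≤ 0 := by
  refine Real.sSup_nonpos ?_
  rintro _ ⟨N, f, -, -, rfl⟩
  have hsum : (fun ω => ∑ i, f i ω) = ∑ i, f i := funext fun ω => (Finset.sum_apply ω _ _).symm
  rw [hsum, map_sum, sub_self, zero_div]

end PriceFunctionals

theorem exists_linearMap_le_of_sublinearOn {E : Type*} [AddCommGroup E] [Module ℝ E]
    (S : Submodule ℝ E) (N : E → ℝ) (hsmul : ∀ c : ℝ, 0 < c → ∀ x ∈ S, N (c • x) = c * N x)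
    (hadd : ∀ x ∈ S, ∀ y ∈ S, N (x + y) ≤ N x + N y) : ∃ L : E →ₗ[ℝ] ℝ, ∀ x ∈ S, L x ≤ N x := by
  have hzero : N 0 = 0 := by
    have := hsmul 2 two_pos 0 S.zero_mem
    rw [smul_zero] at this
    linarith
  obtain ⟨g, -, hg⟩ := exists_extension_of_le_sublinear (⟨⊥, 0⟩ : S →ₗ.[ℝ] ℝ) (fun x => N x)
    (fun c hc x => hsmul c hc x x.2) (fun x y => hadd x x.2 y y.2) (by
      rintro ⟨x, hx⟩
      rw [Submodule.mem_bot] at hx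
      subst hx
      simp [hzero])
  obtain ⟨L, hL⟩ := LinearMap.exists_extend g
  exact ⟨L, fun x hx => (congrArg (· ⟨x, hx⟩) hL).trans_le (hg ⟨x, hx⟩)⟩

section SimpleFunctions

variable {Ω : Type*}

noncomputable def simpleFun (l : List (ℝ × Set Ω)) : Ω → ℝ :=
  (l.map fun p => p.1 • p.2.indicator 1).sum

def smulWeights (c : ℝ) (l : List (ℝ × Set Ω)) : List (ℝ × Set Ω) :=
  l.map fun p => (c * p.1, p.2)

noncomputable def FinAddProb.simpleIntegral (P : FinAddProb Ω) (l : List (ℝ × Set Ω)) : ℝ :=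
  (l.map fun p => p.1 * P.meas p.2).sum

theorem simpleFun_cons (p : ℝ × Set Ω) (l : List (ℝ × Set Ω)) :
    simpleFun (p :: l) = p.1 • p.2.indicator 1 + simpleFun l := by
  simp [simpleFun]

theorem simpleFun_append (l₁ l₂ : List (ℝ × Set Ω)) :
    simpleFun (l₁ ++ l₂) = simpleFun l₁ + simpleFun l₂ := by
  simp [simpleFun]

theorem simpleFun_smulWeights (c : ℝ) (l : List (ℝ × Set Ω)) :
    simpleFun (smulWeights c l) = c • simpleFun l := by
  simp [simpleFun, smulWeights, List.smul_sum, Function.comp_def, mul_smul]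

theorem simpleFun_mem_bddFun (l : List (ℝ × Set Ω)) : simpleFun l ∈ BddFun Ω :=
  (bddSubmodule Ω).list_sum_mem fun _ hf => by
    obtain ⟨p, -, rfl⟩ := List.mem_map.mp hf
    exact (bddSubmodule Ω).smul_mem p.1 (indicator_one_mem_bddFun p.2)

namespace FinAddProb

variable (P : FinAddProb Ω)

theorem simpleIntegral_append (l₁ l₂ : List (ℝ × Set Ω)) :
    P.simpleIntegral (l₁ ++ l₂) = P.simpleIntegral l₁ + P.simpleIntegral l₂ := by
  simp [simpleIntegral]

theorem simpleIntegral_smulWeights (c : ℝ) (l : List (ℝ × Set Ω)) :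
    P.simpleIntegral (smulWeights c l) = c * P.simpleIntegral l := by
  simp [simpleIntegral, smulWeights, Function.comp_def, mul_assoc, List.sum_map_mul_left]

/-- Stated on every `B` so that the induction can split `B` along the sets of the family. -/
theorem mul_meas_le_sum_meas_inter (l : List (ℝ × Set Ω)) :
    ∀ (B : Set Ω) (m : ℝ), (∀ ω ∈ B, m ≤ simpleFun l ω) →
      m * P.meas B ≤ (l.map fun p => p.1 * P.meas (p.2 ∩ B)).sum := by
  induction l with
  | nil =>
    intro B m h
    rcases B.eq_empty_or_nonempty with rfl | ⟨ω, hω⟩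
    · simp [P.meas_empty]
    · simpa using mul_nonpos_of_nonpos_of_nonneg (h ω hω) (P.nonneg B)
  | cons p t ih =>
    obtain ⟨c, A⟩ := p
    intro B m h
    have hin := ih (B ∩ A) (m - c) fun ω hω => by
      have := h ω hω.1
      simp only [simpleFun_cons, Pi.add_apply, Pi.smul_apply, indicator_of_mem hω.2, Pi.one_apply,
        smul_eq_mul, mul_one] at this
      linarith
    have hout := ih (B \ A) m fun ω hω => by
      simpa [simpleFun_cons, indicator_of_notMem hω.2] using h ω hω.1
    have hsplit : ∀ A' : Set Ω, P.meas (A' ∩ B) = P.meas (A' ∩ (B ∩ A)) + P.meas (A' ∩ (B \ A)) :=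
      fun A' => by rw [← inter_assoc, ← inter_sdiff_assoc, P.meas_inter_add_meas_diff]
    have hsum : (t.map fun p => p.1 * P.meas (p.2 ∩ B)).sum =
        (t.map fun p => p.1 * P.meas (p.2 ∩ (B ∩ A))).sum +
          (t.map fun p => p.1 * P.meas (p.2 ∩ (B \ A))).sum := by
      rw [← List.sum_map_add]
      simp only [hsplit, mul_add]
    simp only [List.map_cons, List.sum_cons, hsum, inter_comm A B]
    rw [← P.meas_inter_add_meas_diff A B]
    linarith

theorem le_simpleIntegral {l : List (ℝ × Set Ω)} {m : ℝ} (h : ∀ ω, m ≤ simpleFun l ω) :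
    m ≤ P.simpleIntegral l := by
  simpa [P.total, simpleIntegral] using P.mul_meas_le_sum_meas_inter l univ m fun ω _ => h ω

end FinAddProb

end SimpleFunctions

section Forward

open scoped Pointwise

variable {Ω : Type*}

namespace FinAddProb

variable (P : FinAddProb Ω)

noncomputable def upperIntegral (f : Ω → ℝ) : ℝ :=
  sInf (P.simpleIntegral '' {l | f ≤ simpleFun l})

variable {P}

theorem upperIntegral_nonempty {f : Ω → ℝ} (hf : f ∈ BddFun Ω) :
    (P.simpleIntegral '' {l | f ≤ simpleFun l}).Nonempty := by
  obtain ⟨c, hc⟩ := hf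
  exact ⟨_, [(c, univ)], fun ω => by simpa [simpleFun] using le_of_abs_le (hc ω), rfl⟩

theorem upperIntegral_bddBelow {f : Ω → ℝ} (hf : f ∈ BddFun Ω) :
    BddBelow (P.simpleIntegral '' {l | f ≤ simpleFun l}) := by
  obtain ⟨c, hc⟩ := hf
  refine ⟨-c, ?_⟩
  rintro _ ⟨l, hl, rfl⟩
  exact P.le_simpleIntegral fun ω => (neg_le_of_abs_le (hc ω)).trans (hl ω)

theorem upperIntegral_le {f : Ω → ℝ} (hf : f ∈ BddFun Ω) {l : List (ℝ × Set Ω)}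
    (hl : f ≤ simpleFun l) : P.upperIntegral f ≤ P.simpleIntegral l :=
  csInf_le (upperIntegral_bddBelow hf) ⟨l, hl, rfl⟩

theorem upperIntegral_le_add_mul_meas {f : Ω → ℝ} (hf : f ∈ BddFun Ω) {a b : ℝ} {A : Set Ω}
    (h : ∀ ω, f ω ≤ a + b * A.indicator 1 ω) : P.upperIntegral f ≤ a + b * P.meas A := by
  simpa [simpleIntegral, P.total] using
    upperIntegral_le (P := P) (l := [(a, univ), (b, A)]) hf fun ω => by simpa [simpleFun] using h ω

theorem upperIntegral_add_le {f g : Ω → ℝ} (hf : f ∈ BddFun Ω) (hg : g ∈ BddFun Ω) :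
    P.upperIntegral (f + g) ≤ P.upperIntegral f + P.upperIntegral g := by
  rw [upperIntegral, upperIntegral, upperIntegral, ← csInf_add (upperIntegral_nonempty hf)
    (upperIntegral_bddBelow hf) (upperIntegral_nonempty hg) (upperIntegral_bddBelow hg)]
  refine csInf_le_csInf (upperIntegral_bddBelow ((bddSubmodule Ω).add_mem hf hg))
    ((upperIntegral_nonempty hf).add (upperIntegral_nonempty hg)) ?_
  rintro _ ⟨_, ⟨l₁, hl₁, rfl⟩, _, ⟨l₂, hl₂, rfl⟩, rfl⟩
  refine ⟨l₁ ++ l₂, show f + g ≤ _ from ?_, P.simpleIntegral_append l₁ l₂⟩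
  rw [simpleFun_append]
  exact add_le_add hl₁ hl₂

theorem upperIntegral_smul {f : Ω → ℝ} {c : ℝ} (hc : 0 < c) :
    P.upperIntegral (c • f) = c * P.upperIntegral f := by
  have hset : P.simpleIntegral '' {l | c • f ≤ simpleFun l} =
      c • P.simpleIntegral '' {l | f ≤ simpleFun l} := by
    ext y
    simp only [mem_image, mem_ofPred_eq, mem_smul_set, smul_eq_mul]
    constructor
    · rintro ⟨l, hl, rfl⟩
      refine ⟨_, ⟨smulWeights c⁻¹ l, ?_, rfl⟩, ?_⟩
      · rw [simpleFun_smulWeights, ← inv_smul_smul₀ hc.ne' f]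
        exact smul_le_smul_of_nonneg_left hl (inv_nonneg.mpr hc.le)
      · rw [simpleIntegral_smulWeights, mul_inv_cancel_left₀ hc.ne']
    · rintro ⟨_, ⟨l, hl, rfl⟩, rfl⟩
      refine ⟨smulWeights c l, ?_, P.simpleIntegral_smulWeights c l⟩
      rw [simpleFun_smulWeights]
      exact smul_le_smul_of_nonneg_left hl hc.le
  rw [upperIntegral, hset, Real.sInf_smul_of_nonneg hc.le, smul_eq_mul, upperIntegral]

end FinAddProb

theorem isPriceFun_linearMap {R : Rationality Ω} (L : (Ω → ℝ) →ₗ[ℝ] ℝ) (h1 : L 1 = 1)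
    (hmono : ∀ f ∈ BddFun Ω, ∀ g ∈ BddFun Ω, R.ge f g → L g ≤ L f)
    (hpos : ∀ f ∈ BddFun Ω, R.gt f 0 → 0 < L f) : IsPriceFun R (BddFun Ω) L where
  posHom f _ c _ _ := L.map_smul c f
  subadd f _ g _ _ := (L.map_add f g).le
  norm_one := h1
  mono := hmono
  arbFree := hpos

variable {P : FinAddProb Ω} {L : (Ω → ℝ) →ₗ[ℝ] ℝ}

theorem FinAddProb.map_one_of_le_upperIntegral (hL : ∀ f ∈ BddFun Ω, L f ≤ P.upperIntegral f) :
    L 1 = 1 := by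
  have h1 := (hL 1 one_mem_bddFun).trans
    (P.upperIntegral_le_add_mul_meas (a := 1) (b := 0) (A := ∅) one_mem_bddFun (by simp))
  have h2 := (hL (-1) ((bddSubmodule Ω).neg_mem one_mem_bddFun)).trans
    (P.upperIntegral_le_add_mul_meas (a := -1) (b := 0) (A := ∅)
      ((bddSubmodule Ω).neg_mem one_mem_bddFun) (by simp))
  rw [map_neg] at h2
  linarith

theorem FinAddProb.meas_le_of_le_upperIntegral (hL : ∀ f ∈ BddFun Ω, L f ≤ P.upperIntegral f)
    (A : Set Ω) : P.meas A ≤ L (A.indicator 1) := by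
  have hmem := (bddSubmodule Ω).neg_mem (indicator_one_mem_bddFun A)
  have h := (hL _ hmem).trans
    (P.upperIntegral_le_add_mul_meas (a := 0) (b := -1) (A := A) hmem (by simp))
  rw [map_neg] at h
  linarith

namespace Represents

variable {R : Rationality Ω} (hP : Represents P R)
include hP

theorem robust : Robust R := by
  have hrep := represents_iff.mp hP
  refine fun f hf => (hrep f 0).mpr fun ε hε => le_antisymm ?_ (P.nonneg _)
  refine ((hrep _ 0).mp (hf (ε / 2) (half_pos hε)).1 (ε / 2) (half_pos hε)).symm ▸
    P.meas_mono fun ω (hω : f ω ≤ 0 - ε) => ?_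
  show f ω + ε / 2 ≤ 0 - ε / 2
  linarith

variable (hL : ∀ f ∈ BddFun Ω, L f ≤ P.upperIntegral f)
include hL

theorem map_le_map_of_ge {f g : Ω → ℝ} (hf : f ∈ BddFun Ω) (hg : g ∈ BddFun Ω)
    (hfg : R.ge f g) : L g ≤ L f := by
  have hgf := (bddSubmodule Ω).sub_mem hg hf
  have ⟨c, hc⟩ := hgf
  refine le_of_forall_pos_le_add fun δ hδ => ?_
  have hnull := (represents_iff.mp hP f g).mp hfg δ hδ
  have h := (hL _ hgf).trans (P.upperIntegral_le_add_mul_meas (a := δ) (b := c)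
    (A := {ω | f ω ≤ g ω - δ}) hgf fun ω => ?_)
  · rw [hnull, mul_zero, add_zero, map_sub] at h
    linarith
  · have hcω := le_of_abs_le (hc ω)
    by_cases hω : f ω ≤ g ω - δ
    · simp only [indicator_of_mem (show ω ∈ {ω | f ω ≤ g ω - δ} from hω), Pi.one_apply, mul_one]
      linarith
    · simp only [indicator_of_notMem (show ω ∉ {ω | f ω ≤ g ω - δ} from hω), mul_zero,
        add_zero, Pi.sub_apply]
      linarith

theorem map_pos_of_gt {f : Ω → ℝ} (hf : f ∈ BddFun Ω) (hgt : R.gt f 0) : 0 < L f := by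
  have hrep := represents_iff.mp hP
  obtain ⟨ε, hε, hB⟩ : ∃ ε : ℝ, 0 < ε ∧ P.meas {ω | (0 : Ω → ℝ) ω ≤ f ω - ε} ≠ 0 := by
    by_contra! h
    exact hgt.2 ((hrep 0 f).mpr h)
  set B := {ω | (0 : Ω → ℝ) ω ≤ f ω - ε}
  have hfB : R.ge f (ε • B.indicator 1) := by
    refine (hrep _ _).mpr fun η hη => le_antisymm ?_ (P.nonneg _)
    refine ((hrep f 0).mp hgt.1 η hη).symm ▸ P.meas_mono fun ω hω => ?_
    by_cases hωB : ω ∈ B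
    · have : ε ≤ f ω := by simpa [B] using hωB
      have : f ω ≤ ε - η := by simpa [indicator_of_mem hωB] using hω
      linarith
    · simpa [hωB] using hω
  have hmem : ε • B.indicator 1 ∈ BddFun Ω :=
    (bddSubmodule Ω).smul_mem ε (indicator_one_mem_bddFun B)
  calc 0 < ε * P.meas B := mul_pos hε ((P.nonneg B).lt_of_ne' hB)
    _ ≤ ε * L (B.indicator 1) :=
        mul_le_mul_of_nonneg_left (P.meas_le_of_le_upperIntegral hL B) hε.le
    _ = L (ε • B.indicator 1) := (L.map_smul ε _).symm
    _ ≤ L f := hP.map_le_map_of_ge hL hf hmem hfB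

omit hL in
theorem exists_isPriceFun : ∃ ρ : (Ω → ℝ) → ℝ, IsPriceFun R (BddFun Ω) ρ ∧ marketPower ρ < 1 := by
  obtain ⟨L, hL⟩ := exists_linearMap_le_of_sublinearOn (bddSubmodule Ω) P.upperIntegral
    (fun _ hc _ _ => P.upperIntegral_smul hc) (fun _ hf _ hg => P.upperIntegral_add_le hf hg)
  exact ⟨L, isPriceFun_linearMap L (P.map_one_of_le_upperIntegral hL)
    (fun _ hf _ hg => hP.map_le_map_of_ge hL hf hg) (fun _ hf => hP.map_pos_of_gt hL hf),
    (marketPower_linearMap_nonpos L).trans_lt one_pos⟩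

end Represents

end Forward

section Backward

open scoped Pointwise

variable {Ω : Type*}

def weight (l : List (ℝ × Set Ω)) : ℝ :=
  (l.map Prod.fst).sum

theorem weight_smulWeights (c : ℝ) (l : List (ℝ × Set Ω)) :
    weight (smulWeights c l) = c * weight l := by
  simp [weight, smulWeights, Function.comp_def, List.sum_map_mul_left]

theorem smulWeights_smulWeights (a b : ℝ) (l : List (ℝ × Set Ω)) :
    smulWeights a (smulWeights b l) = smulWeights (a * b) l := by
  simp [smulWeights, Function.comp_def, mul_assoc]

theorem smulWeights_one (l : List (ℝ × Set Ω)) : smulWeights 1 l = l := by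
  simp [smulWeights]

variable {R : Rationality Ω} {ρ : (Ω → ℝ) → ℝ} {C δ : ℝ}

def IsHeavy (ρ : (Ω → ℝ) → ℝ) (δ : ℝ) (l : List (ℝ × Set Ω)) : Prop :=
  ∀ p ∈ l, 0 ≤ p.1 ∧ δ ≤ ρ (p.2.indicator 1)

theorem isHeavy_nil : IsHeavy ρ δ [] :=
  fun _ hp => absurd hp List.not_mem_nil

theorem IsHeavy.smulWeights {l : List (ℝ × Set Ω)} (hl : IsHeavy ρ δ l) {c : ℝ} (hc : 0 ≤ c) :
    IsHeavy ρ δ (smulWeights c l) := by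
  simp only [IsHeavy, _root_.smulWeights, List.mem_map]
  rintro _ ⟨p, hp, rfl⟩
  exact ⟨mul_nonneg hc (hl p hp).1, (hl p hp).2⟩

noncomputable def sandwichValue (ρ : (Ω → ℝ) → ℝ) (C δ : ℝ) (x : Ω → ℝ)
    (l : List (ℝ × Set Ω)) : ℝ :=
  C * ρ (x + simpleFun l) - δ * weight l

/-- A linear functional below `sandwich ρ C δ` lies below `C • ρ` and is at least `δ` on every
indicator of price at least `δ`. -/
noncomputable def sandwich (ρ : (Ω → ℝ) → ℝ) (C δ : ℝ) (x : Ω → ℝ) : ℝ :=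
  sInf (sandwichValue ρ C δ x '' {l | IsHeavy ρ δ l})

variable (hρ : IsPriceFun0 R (BddFun Ω) ρ)
include hρ

theorem sandwichValue_smul {x : Ω → ℝ} (hx : x ∈ BddFun Ω) (l : List (ℝ × Set Ω)) {c : ℝ}
    (hc : 0 ≤ c) : sandwichValue ρ C δ (c • x) (smulWeights c l) = c * sandwichValue ρ C δ x l := by
  rw [sandwichValue, sandwichValue, simpleFun_smulWeights, weight_smulWeights, ← smul_add,
    hρ.map_smul ((bddSubmodule Ω).add_mem hx (simpleFun_mem_bddFun l)) hc]
  ring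

theorem sandwich_smul {x : Ω → ℝ} (hx : x ∈ BddFun Ω) {c : ℝ} (hc : 0 < c) :
    sandwich ρ C δ (c • x) = c * sandwich ρ C δ x := by
  have hset : sandwichValue ρ C δ (c • x) '' {l | IsHeavy ρ δ l} =
      c • sandwichValue ρ C δ x '' {l | IsHeavy ρ δ l} := by
    ext y
    simp only [mem_image, mem_ofPred_eq, mem_smul_set, smul_eq_mul]
    constructor
    · rintro ⟨l, hl, rfl⟩
      refine ⟨_, ⟨smulWeights c⁻¹ l, hl.smulWeights (inv_nonneg.mpr hc.le), rfl⟩, ?_⟩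
      rw [← sandwichValue_smul hρ hx _ hc.le, smulWeights_smulWeights,
        mul_inv_cancel₀ hc.ne', smulWeights_one]
    · rintro ⟨_, ⟨l, hl, rfl⟩, rfl⟩
      exact ⟨smulWeights c l, hl.smulWeights hc.le, sandwichValue_smul hρ hx l hc.le⟩
  rw [sandwich, hset, Real.sInf_smul_of_nonneg hc.le, smul_eq_mul, sandwich]

variable
  (hsuper : ∀ fs : List (Ω → ℝ), (∀ f ∈ fs, 0 ≤ f ∧ f ∈ BddFun Ω) → (fs.map ρ).sum ≤ C * ρ fs.sum)
include hsuper

theorem mul_weight_le_of_isHeavy {l : List (ℝ × Set Ω)} (hl : IsHeavy ρ δ l) :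
    δ * weight l ≤ C * ρ (simpleFun l) := by
  have hterms : ∀ p ∈ l, δ * p.1 ≤ ρ (p.1 • p.2.indicator 1) := fun p hp => by
    rw [hρ.map_smul (indicator_one_mem_bddFun p.2) (hl p hp).1, mul_comm]
    exact mul_le_mul_of_nonneg_left (hl p hp).2 (hl p hp).1
  calc δ * weight l = (l.map fun p => δ * p.1).sum := by
        simp [weight, List.sum_map_mul_left]
    _ ≤ (l.map fun p => ρ (p.1 • p.2.indicator 1)).sum := List.sum_le_sum hterms
    _ = ((l.map fun p => p.1 • p.2.indicator 1).map ρ).sum := by simp [Function.comp_def]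
    _ ≤ C * ρ (simpleFun l) := hsuper _ fun f hf => by
        obtain ⟨p, hp, rfl⟩ := List.mem_map.mp hf
        exact ⟨smul_nonneg (hl p hp).1 (indicator_nonneg fun _ _ => zero_le_one),
          (bddSubmodule Ω).smul_mem p.1 (indicator_one_mem_bddFun p.2)⟩

variable (hC : 0 ≤ C)
include hC

theorem sandwich_bddBelow {x : Ω → ℝ} (hx : x ∈ BddFun Ω) :
    BddBelow (sandwichValue ρ C δ x '' {l | IsHeavy ρ δ l}) := by
  refine ⟨-(C * ρ (-x)), ?_⟩
  rintro _ ⟨l, hl, rfl⟩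
  have hsplit := hρ.map_add_le ((bddSubmodule Ω).add_mem hx (simpleFun_mem_bddFun l))
    ((bddSubmodule Ω).neg_mem hx)
  rw [add_neg_cancel_comm] at hsplit
  have hC' := mul_le_mul_of_nonneg_left hsplit hC
  have := mul_weight_le_of_isHeavy hρ hsuper hl
  rw [sandwichValue]
  linarith [mul_add C (ρ (x + simpleFun l)) (ρ (-x))]

theorem sandwich_le {x : Ω → ℝ} (hx : x ∈ BddFun Ω) {l : List (ℝ × Set Ω)}
    (hl : IsHeavy ρ δ l) : sandwich ρ C δ x ≤ sandwichValue ρ C δ x l :=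
  csInf_le (sandwich_bddBelow hρ hsuper hC hx) ⟨l, hl, rfl⟩

theorem sandwich_add_le {x y : Ω → ℝ} (hx : x ∈ BddFun Ω) (hy : y ∈ BddFun Ω) :
    sandwich ρ C δ (x + y) ≤ sandwich ρ C δ x + sandwich ρ C δ y := by
  have hne : ∀ z, (sandwichValue ρ C δ z '' {l | IsHeavy ρ δ l}).Nonempty := fun z =>
    ⟨_, [], isHeavy_nil, rfl⟩
  rw [sandwich, sandwich, sandwich, ← csInf_add (hne x) (sandwich_bddBelow hρ hsuper hC hx)
    (hne y) (sandwich_bddBelow hρ hsuper hC hy)]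
  refine le_csInf ((hne x).add (hne y)) ?_
  rintro _ ⟨_, ⟨l₁, hl₁, rfl⟩, _, ⟨l₂, hl₂, rfl⟩, rfl⟩
  refine (sandwich_le hρ hsuper hC ((bddSubmodule Ω).add_mem hx hy) (l := l₁ ++ l₂)
    fun p hp => (List.mem_append.mp hp).elim (hl₁ p) (hl₂ p)).trans ?_
  have hρadd := hρ.map_add_le ((bddSubmodule Ω).add_mem hx (simpleFun_mem_bddFun l₁))
    ((bddSubmodule Ω).add_mem hy (simpleFun_mem_bddFun l₂))
  rw [add_add_add_comm, ← simpleFun_append] at hρadd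
  have hC' := mul_le_mul_of_nonneg_left hρadd hC
  simp only [sandwichValue, weight, List.map_append, List.sum_append, mul_add] at hC' ⊢
  linarith

theorem exists_linearMap_le_and_le_indicator :
    ∃ L : (Ω → ℝ) →ₗ[ℝ] ℝ, (∀ x ∈ BddFun Ω, L x ≤ C * ρ x) ∧
      ∀ A : Set Ω, δ ≤ ρ (A.indicator 1) → δ ≤ L (A.indicator 1) := by
  obtain ⟨L, hL⟩ := exists_linearMap_le_of_sublinearOn (bddSubmodule Ω) (sandwich ρ C δ)
    (fun _ hc _ hx => sandwich_smul hρ hx hc)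
    (fun _ hx _ hy => sandwich_add_le hρ hsuper hC hx hy)
  refine ⟨L, fun x hx => ?_, fun A hA => ?_⟩
  · simpa [sandwichValue, simpleFun, weight] using
      (hL x hx).trans (sandwich_le hρ hsuper hC hx isHeavy_nil)
  · have hmem := (bddSubmodule Ω).neg_mem (indicator_one_mem_bddFun A)
    have h := (hL _ hmem).trans (sandwich_le hρ hsuper hC hmem (l := [(1, A)])
      fun p hp => by rw [List.mem_singleton.mp hp]; exact ⟨zero_le_one, hA⟩)
    simp [sandwichValue, simpleFun, weight, hρ.map_zero] at h
    linarith

end Backward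

namespace FinAddProb

variable {Ω : Type*}

noncomputable def ofLinearMap (L : (Ω → ℝ) →ₗ[ℝ] ℝ) (hpos : ∀ A : Set Ω, 0 ≤ L (A.indicator 1))
    (hone : 0 < L 1) : FinAddProb Ω where
  meas A := L (A.indicator 1) / L 1
  nonneg A := div_nonneg (hpos A) hone.le
  total := by rw [indicator_univ, div_self hone.ne']
  additive A B h := by
    rw [indicator_union_of_disjoint h, ← add_div]
    exact congrArg (· / L 1) (L.map_add _ _)

theorem summable_geometric_mul_meas (P : ℕ → FinAddProb Ω) (A : Set Ω) :
    Summable fun n => (1 / 2 : ℝ) ^ (n + 1) * (P n).meas A :=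
  (summable_geometric_two.mul_right (1 / 2)).of_nonneg_of_le
    (fun n => mul_nonneg (by positivity) ((P n).nonneg A))
    (fun n => by
      rw [← pow_succ]
      exact mul_le_of_le_one_right (by positivity) ((P n).total ▸ (P n).meas_mono (subset_univ A)))

noncomputable def mixture (P : ℕ → FinAddProb Ω) : FinAddProb Ω where
  meas A := ∑' n, (1 / 2 : ℝ) ^ (n + 1) * (P n).meas A
  nonneg A := tsum_nonneg fun n => mul_nonneg (by positivity) ((P n).nonneg A)
  total := by
    simp only [total, mul_one, pow_succ, tsum_mul_right, tsum_geometric_two]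
    norm_num
  additive A B h := by
    simp only [(P _).additive A B h, mul_add]
    exact (summable_geometric_mul_meas P A).tsum_add (summable_geometric_mul_meas P B)

theorem mixture_meas_eq_zero_iff (P : ℕ → FinAddProb Ω) (A : Set Ω) :
    (mixture P).meas A = 0 ↔ ∀ n, (P n).meas A = 0 := by
  refine ⟨fun h n => ?_, fun h => by simp [mixture, h]⟩
  by_contra hn
  refine h.not_gt ((summable_geometric_mul_meas P A).tsum_pos
    (fun n => mul_nonneg (by positivity) ((P n).nonneg A)) n ?_)
  exact mul_pos (by positivity) (((P n).nonneg A).lt_of_ne' hn)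

end FinAddProb

theorem exists_finAddProb_meas_eq_zero_iff {Ω : Type*} {R : Rationality Ω}
    {ρ : (Ω → ℝ) → ℝ} {C : ℝ} (hρ : IsPriceFun0 R (BddFun Ω) ρ) (hC : 0 ≤ C)
    (hsuper : ∀ fs : List (Ω → ℝ), (∀ f ∈ fs, 0 ≤ f ∧ f ∈ BddFun Ω) →
      (fs.map ρ).sum ≤ C * ρ fs.sum) :
    ∃ P : FinAddProb Ω, ∀ A : Set Ω, P.meas A = 0 ↔ ρ (A.indicator 1) ≤ 0 := by
  choose L hLρ hLδ using fun n : ℕ =>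
    exists_linearMap_le_and_le_indicator (δ := 1 / ((n : ℝ) + 1)) hρ hsuper hC
  have hpos : ∀ n (A : Set Ω), 0 ≤ L n (A.indicator 1) := fun n A => by
    have hmem := (bddSubmodule Ω).neg_mem (indicator_one_mem_bddFun A)
    have := (hLρ n _ hmem).trans (mul_nonpos_of_nonneg_of_nonpos hC
      (hρ.map_zero ▸ hρ.mono_of_le (bddSubmodule Ω).zero_mem hmem
        (neg_nonpos.mpr (indicator_nonneg fun _ _ => zero_le_one))))
    rw [map_neg] at this
    linarith
  have hone : ∀ n, 0 < L n 1 := fun n => by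
    have := hLδ n univ (by rw [indicator_univ, hρ.norm_one, div_le_one (by positivity)]; simp)
    rw [indicator_univ] at this
    exact (by positivity : (0 : ℝ) < 1 / ((n : ℝ) + 1)).trans_le this
  refine ⟨FinAddProb.mixture fun n => FinAddProb.ofLinearMap (L n) (hpos n) (hone n), fun A => ?_⟩
  simp only [FinAddProb.mixture_meas_eq_zero_iff, FinAddProb.ofLinearMap, div_eq_zero_iff,
    (hone _).ne', or_false]
  refine ⟨fun h => not_lt.mp fun hA => ?_, fun hA n => ?_⟩
  · obtain ⟨n, hn⟩ := exists_nat_one_div_lt hA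
    have := hLδ n A hn.le
    rw [h n] at this
    exact (by positivity : (0 : ℝ) < 1 / ((n : ℝ) + 1)).not_ge this
  · exact le_antisymm ((hLρ n _ (indicator_one_mem_bddFun A)).trans
      (mul_nonpos_of_nonneg_of_nonpos hC hA)) (hpos n A)

theorem represents_of_meas_eq_zero_iff {Ω : Type*} {R : Rationality Ω} (hR : Robust R)
    {P : FinAddProb Ω} (hP : ∀ A : Set Ω, P.meas A = 0 ↔ R.Negligible A) : Represents P R :=
  represents_iff.mpr fun f h => by simp only [R.ge_iff_forall_negligible hR f h, hP]

theorem Robust.exists_represents {Ω : Type*} {R : Rationality Ω} (hR : Robust R)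
    {ρ : (Ω → ℝ) → ℝ} (hρ : IsPriceFun R (BddFun Ω) ρ) (hm : marketPower ρ < 1) :
    ∃ P : FinAddProb Ω, Represents P R := by
  have hm' : 0 < 1 - marketPower ρ := by linarith
  obtain ⟨P, hP⟩ := exists_finAddProb_meas_eq_zero_iff hρ.toIsPriceFun0 (inv_nonneg.mpr hm'.le)
    fun fs hfs => (le_inv_mul_iff₀ hm').mpr (hρ.one_sub_marketPower_mul_sum_le fs hfs)
  exact ⟨P, represents_of_meas_eq_zero_iff hR fun A => (hP A).trans (hρ.negligible_iff A).symm⟩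

/-- Theorem `th ge*` (a): `≥_*` is represented by some `P ∈ Prob(Ω)`
iff (a) `≥_*` is robust and (b) there exists `ρ ∈ Π(B(Ω))` with `𝓂(ρ) < 1`. -/
theorem represented_iff_robust_and_price {Ω : Type*} (R : Rationality Ω) :
    (∃ P : FinAddProb Ω, Represents P R) ↔
    (Robust R ∧ ∃ ρ : (Ω → ℝ) → ℝ, IsPriceFun R (BddFun Ω) ρ ∧ marketPower ρ < 1) := by
  constructor
  · rintro ⟨P, hP⟩
    exact ⟨hP.robust, hP.exists_isPriceFun⟩
  · rintro ⟨hR, ρ, hρ, hm⟩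
    exact hR.exists_represents hρ hm
end

section
/- Let ≥_* be a reflexive, transitive relation on 𝔉(Ω) satisfying axioms (i)–(iii) together with the robustness property (f + ε >_* 0 for all ε > 0 implies f ≥_* 0). Then for every f ∈ 𝔉(Ω), f ≥_* 0 holds if and only if the set {ω : f(ω) ≤ −ε} is negligible for every ε > 0. -/
open Set Filter

section Helpers

variable {Ω : Type*} (R : Rationality Ω)

/-- Shift lemma: `f ≥_* g` implies `f + h ≥_* g + h`. -/
lemma Rationality.shift (f g h : Ω → ℝ) (hfg : R.ge f g) :
    R.ge (fun ω => f ω + h ω) (fun ω => g ω + h ω) := by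
  have := R.affine f g (fun _ => 1) h hfg (fun _ => zero_le_one) ⟨1, fun _ => le_refl 1⟩
  simpa using this

/-- Subsets of negligible sets are negligible. -/
lemma Rationality.negligible_subset {A B : Set Ω} (hA : R.Negligible A) (hBA : B ⊆ A) :
    R.Negligible B := by
  refine R.trans _ _ _ hA (R.ge_of_le _ _ fun ω => ?_)
  by_cases hB : ω ∈ B
  · simp [Set.indicator_of_mem hB, Set.indicator_of_mem (hBA hB)]
  · simp only [Set.indicator_of_notMem hB]
    exact Set.indicator_nonneg (fun _ _ => zero_le_one) ω

/-- Core lemma: a nonnegative function supported on a negligible set is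
`≥_*`-dominated by `0`. -/
lemma Rationality.ge_zero_of_supported {A : Set Ω} (hA : R.Negligible A) (w : Ω → ℝ)
    (hw : ∀ ω, 0 ≤ w ω) (hsupp : ∀ ω, w ω ≠ 0 → ω ∈ A) : R.ge 0 w := by
  by_contra hn
  have hw0 : R.ge w 0 := R.ge_of_le w 0 (by simpa using hw)
  obtain ⟨-, h2⟩ := R.trunc w hw0 hn
  apply h2
  refine R.trans _ _ _ hA (R.ge_of_le _ _ fun ω => ?_)
  by_cases hm : ω ∈ A
  · simp only [Set.indicator_of_mem hm]
    exact min_le_right _ _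
  · have : w ω = 0 := by by_contra h; exact hm (hsupp ω h)
    simp [Set.indicator_of_notMem hm, this]

/-- From negligibility of `A`, `c·1_{Aᶜ} ≥_* c` for `c ≥ 0`. -/
lemma Rationality.indicator_compl_ge {A : Set Ω} (hA : R.Negligible A) (c : ℝ) (hc : 0 ≤ c) :
    R.ge (Aᶜ.indicator fun _ => c) (fun _ => c) := by
  have h := R.affine 0 (A.indicator fun _ => (1:ℝ)) (fun _ => c) (Aᶜ.indicator fun _ => c) hA
    (fun _ => hc) ⟨c, fun _ => le_refl c⟩
  have e1 : (fun ω => c * (0:Ω → ℝ) ω + (Aᶜ.indicator fun _ => c) ω)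
      = (Aᶜ.indicator fun _ => c) := by funext ω; simp
  have e2 : (fun ω => c * (A.indicator fun _ => (1:ℝ)) ω + (Aᶜ.indicator fun _ => c) ω)
      = (fun _ => c) := by
    funext ω
    by_cases hm : ω ∈ A
    · simp [Set.indicator_of_mem hm, Set.indicator_of_notMem (by simpa using hm : ω ∉ Aᶜ)]
    · simp [Set.indicator_of_notMem hm, Set.indicator_of_mem (by simpa using hm : ω ∈ Aᶜ)]
  rw [e1, e2] at h
  exact h

end Helpers

/-- under the robustness property, `f ≥_* 0` iff `{f ≤ -ε}` is
negligible for every `ε > 0`. -/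
theorem ge_zero_iff_negligible_tails {Ω : Type*} (R : Rationality Ω) (hrob : Robust R) :
    ∀ f : Ω → ℝ, R.ge f 0 ↔ ∀ ε : ℝ, 0 < ε → R.Negligible {ω | f ω ≤ -ε} := by

  intro f
  constructor
  · -- forward direction
    intro hf ε hε
    set A : Set Ω := {ω | f ω ≤ -ε} with hAdef
    have hb : ∀ ω, 0 ≤ (A.indicator fun _ => ε⁻¹) ω :=
      fun ω => Set.indicator_nonneg (fun _ _ => by positivity) ω
    have hbd : ∃ c : ℝ, ∀ ω, (A.indicator fun _ => ε⁻¹) ω ≤ c :=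
      ⟨ε⁻¹, fun ω => Set.indicator_le_self' (fun _ _ => by positivity) ω⟩
    have h := R.affine f 0 (A.indicator fun _ => ε⁻¹) (A.indicator fun _ => (1:ℝ)) hf hb hbd
    have eh : (fun ω => (A.indicator fun _ => ε⁻¹) ω * (0:Ω→ℝ) ω + (A.indicator fun _ => (1:ℝ)) ω)
        = (A.indicator fun _ => (1:ℝ)) := by funext ω; simp
    rw [eh] at h
    refine R.trans _ _ _ (R.ge_of_le _ _ fun ω => ?_) h
    by_cases hm : ω ∈ A
    · have hfω : f ω ≤ -ε := hm
      have : ε⁻¹ * f ω ≤ -1 := by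
        have := (div_le_iff₀ hε).mpr (by linarith : f ω ≤ -1 * ε)
        rw [div_eq_inv_mul] at this; linarith
      simp only [Set.indicator_of_mem hm, Pi.zero_apply]
      linarith
    · simp [Set.indicator_of_notMem hm]
  · -- backward direction
    intro htail
    apply hrob
    intro ε hε
    -- the negative part of f + ε
    set w : Ω → ℝ := fun ω => max (-(f ω + ε)) 0 with hwdef
    have hw : ∀ ω, 0 ≤ w ω := fun ω => le_max_right _ _
    have hA : R.Negligible {ω | f ω ≤ -(ε/2)} := htail (ε/2) (by linarith)
    have hsupp : ∀ ω, w ω ≠ 0 → ω ∈ {ω | f ω ≤ -(ε/2)} := by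
      intro ω hne
      have : 0 < -(f ω + ε) := by
        by_contra h
        exact hne (max_eq_right (by linarith) )
      show f ω ≤ -(ε/2); linarith
    have hcore : R.ge 0 w := R.ge_zero_of_supported hA w hw hsupp
    have hnegw : R.ge (fun ω => -w ω) 0 := by
      have := R.shift 0 w (fun ω => -w ω) hcore
      have e1 : (fun ω => (0:Ω→ℝ) ω + -w ω) = (fun ω => -w ω) := by funext ω; simp
      have e2 : (fun ω => w ω + -w ω) = (0:Ω→ℝ) := by funext ω; simp
      rwa [e1, e2] at this
    have hge : R.ge (fun ω => f ω + ε) 0 := by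
      refine R.trans _ _ _ (R.ge_of_le _ _ fun ω => ?_) hnegw
      have : -(f ω + ε) ≤ w ω := le_max_left _ _
      linarith
    refine ⟨hge, ?_⟩
    intro hc
    -- derive 0 ≥_* 1 for a contradiction
    set A : Set Ω := {ω | f ω ≤ -(ε/2)} with hA2def
    set g₀ : Ω → ℝ := fun ω => Aᶜ.indicator (fun _ => ε/2) ω - w ω with hg0def
    have s1 : R.ge (fun ω => f ω + ε) g₀ := by
      refine R.ge_of_le _ _ fun ω => ?_
      by_cases hm : ω ∈ A
      · have : -(f ω + ε) ≤ w ω := le_max_left _ _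
        simp only [hg0def, Set.indicator_of_notMem (by simpa using hm : ω ∉ Aᶜ)]
        linarith
      · have hfω : -(ε/2) < f ω := lt_of_not_ge hm
        have hwω : w ω = 0 := max_eq_right (by linarith)
        simp only [hg0def, Set.indicator_of_mem (by simpa using hm : ω ∈ Aᶜ), hwω]
        linarith
    have s2 : R.ge 0 g₀ := R.trans _ _ _ hc s1
    have s3 : R.ge w (Aᶜ.indicator fun _ => ε/2) := by
      have := R.shift 0 g₀ w s2
      have e1 : (fun ω => (0:Ω→ℝ) ω + w ω) = w := by funext ω; simp
      have e2 : (fun ω => g₀ ω + w ω) = (Aᶜ.indicator fun _ => ε/2) := by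
        funext ω; simp [hg0def]
      rwa [e1, e2] at this
    have s4 : R.ge 0 (Aᶜ.indicator fun _ => ε/2) := R.trans _ _ _ hcore s3
    have s5 : R.ge (Aᶜ.indicator fun _ => ε/2) (fun _ => ε/2) :=
      R.indicator_compl_ge hA (ε/2) (by linarith)
    have s6 : R.ge 0 (fun _ => ε/2) := R.trans _ _ _ s4 s5
    have s7 := R.affine 0 (fun _ => ε/2) (fun _ => 2/ε) 0 s6
      (fun _ => by positivity) ⟨2/ε, fun _ => le_refl _⟩
    have e1 : (fun ω => (2/ε) * (0:Ω→ℝ) ω + (0:Ω→ℝ) ω) = (0:Ω→ℝ) := by funext ω; simp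
    have e2 : (fun ω => (2/ε) * (fun _ => ε/2) ω + (0:Ω→ℝ) ω) = (1:Ω→ℝ) := by
      funext ω
      have : (2/ε) * (ε/2) = 1 := by field_simp
      simpa using this
    rw [e1, e2] at s7
    exact R.one_gt_zero.2 s7
end
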